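/- Fix a directed graph C and a phase space function 𝒫: C₀ → FinVect. For every étale map φ: Γ → Γ' of finite graphs over C there exists a unique linear map 𝕍_FV(φ): 𝕍_FV(Γ') → 𝕍_FV(Γ) satisfying ϖ_a ∘ 𝕍_FV(φ) = Ctrl_FV(φ_a)⁻¹ ∘ ϖ_{φ(a)} for every node a of Γ, and 𝕍_FV(id) = id and 𝕍_FV(ψ ∘ φ) = 𝕍_FV(φ) ∘ 𝕍_FV(ψ); that is, 𝕍_FV is a contravariant functor from the category of finite graphs over C with étale maps to the category of vector spaces. -/

import Mathlib

/-- A directed graph: a set of edges, a set of nodes, and source/target maps. -/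
structure DGraph : Type 1 where
  V : Type
  E : Type
  s : E → V
  t : E → V

/-- A map of directed graphs. -/
@[ext]
structure GraphMap (G G' : DGraph) where
  vMap : G.V → G'.V
  eMap : G.E → G'.E
  hs : ∀ e, G'.s (eMap e) = vMap (G.s e)
  ht : ∀ e, G'.t (eMap e) = vMap (G.t e)

namespace GraphMap

def id (G : DGraph) : GraphMap G G :=
  ⟨fun v => v, fun e => e, fun _ => rfl, fun _ => rfl⟩

def comp {G₁ G₂ G₃ : DGraph} (g : GraphMap G₂ G₃) (f : GraphMap G₁ G₂) :
    GraphMap G₁ G₃ where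
  vMap v := g.vMap (f.vMap v)
  eMap e := g.eMap (f.eMap e)
  hs e := by rw [g.hs, f.hs]
  ht e := by rw [g.ht, f.ht]

end GraphMap

/-- A graph colored by the graph `C`, i.e. a graph together with a map of graphs to `C`. -/
structure CGraph (C : DGraph) : Type 1 where
  gr : DGraph
  col : GraphMap gr C

/-- A map of graphs over `C`. -/
@[ext]
structure CMap {C : DGraph} (Γ Γ' : CGraph C) where
  toMap : GraphMap Γ.gr Γ'.gr
  hv : ∀ v, Γ'.col.vMap (toMap.vMap v) = Γ.col.vMap v
  he : ∀ e, Γ'.col.eMap (toMap.eMap e) = Γ.col.eMap e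

namespace CMap

variable {C : DGraph}

def id (Γ : CGraph C) : CMap Γ Γ := ⟨GraphMap.id _, fun _ => rfl, fun _ => rfl⟩

def comp {Γ₁ Γ₂ Γ₃ : CGraph C} (g : CMap Γ₂ Γ₃) (f : CMap Γ₁ Γ₂) : CMap Γ₁ Γ₃ where
  toMap := g.toMap.comp f.toMap
  hv v := by
    show Γ₃.col.vMap (g.toMap.vMap (f.toMap.vMap v)) = Γ₁.col.vMap v
    rw [g.hv, f.hv]
  he e := by
    show Γ₃.col.eMap (g.toMap.eMap (f.toMap.eMap e)) = Γ₁.col.eMap e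
    rw [g.he, f.he]

/-- A map of graphs over `C` is an isomorphism iff it is bijective on nodes and edges. -/
def IsIso {Γ Γ' : CGraph C} (φ : CMap Γ Γ') : Prop :=
  Function.Bijective φ.toMap.vMap ∧ Function.Bijective φ.toMap.eMap

theorem isIso_id (Γ : CGraph C) : (CMap.id Γ).IsIso :=
  ⟨Function.bijective_id, Function.bijective_id⟩

theorem IsIso.comp {Γ₁ Γ₂ Γ₃ : CGraph C} {g : CMap Γ₂ Γ₃} {f : CMap Γ₁ Γ₂}
    (hg : g.IsIso) (hf : f.IsIso) : (g.comp f).IsIso :=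
  ⟨hg.1.comp hf.1, hg.2.comp hf.2⟩

end CMap

variable {C : DGraph}

/-- The set of edges of `Γ` with target `a`; these are both the edges and the
leaves of the input tree `I(a)`. -/
abbrev inEdge (Γ : CGraph C) (a : Γ.gr.V) : Type := {e : Γ.gr.E // Γ.gr.t e = a}

/-- The input tree `I(a)` of a node `a` of a graph `Γ` over `C`, as a graph over `C`. -/
def inTree (Γ : CGraph C) (a : Γ.gr.V) : CGraph C where
  gr :=
    { V := Unit ⊕ inEdge Γ a
      E := inEdge Γ a
      s := Sum.inr
      t := fun _ => Sum.inl () }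
  col :=
    { vMap := Sum.elim (fun _ => Γ.col.vMap a) (fun e => Γ.col.vMap (Γ.gr.s e.1))
      eMap := fun e => Γ.col.eMap e.1
      hs := fun e => Γ.col.hs e.1
      ht := fun e => by
        show C.t (Γ.col.eMap e.1) = Γ.col.vMap a
        rw [Γ.col.ht e.1, e.2] }

/-- The edge map `I(a) → I(φ(a))` induced by a map `φ` of graphs over `C`. -/
def liftEdge {Γ Γ' : CGraph C} (φ : CMap Γ Γ') (a : Γ.gr.V) (e : inEdge Γ a) :
    inEdge Γ' (φ.toMap.vMap a) :=
  ⟨φ.toMap.eMap e.1, by rw [φ.toMap.ht, e.2]⟩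

/-- The map of input trees `φ_a : I(a) → I(φ(a))` induced by a map `φ` of graphs over `C`. -/
def inMap {Γ Γ' : CGraph C} (φ : CMap Γ Γ') (a : Γ.gr.V) :
    CMap (inTree Γ a) (inTree Γ' (φ.toMap.vMap a)) where
  toMap :=
    { vMap := Sum.elim (fun _ => Sum.inl ()) (fun e => Sum.inr (liftEdge φ a e))
      eMap := liftEdge φ a
      hs := fun _ => rfl
      ht := fun _ => rfl }
  hv v := by
    cases v with
    | inl u => exact φ.hv a
    | inr e =>
      show Γ'.col.vMap (Γ'.gr.s (φ.toMap.eMap e.1)) = Γ.col.vMap (Γ.gr.s e.1)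
      rw [φ.toMap.hs, φ.hv]
  he e := φ.he e.1

/-- A map of graphs over `C` is *étale* if the induced maps of input trees are all
isomorphisms of graphs over `C`. -/
def IsEtale {Γ Γ' : CGraph C} (φ : CMap Γ Γ') : Prop :=
  ∀ a : Γ.gr.V, (inMap φ a).IsIso

section TreeLemmas

variable {Γ Γ' : CGraph C} {a : Γ.gr.V} {b : Γ'.gr.V}

theorem CMap.vMap_inr (σ : CMap (inTree Γ a) (inTree Γ' b)) (e : inEdge Γ a) :
    σ.toMap.vMap (Sum.inr e) = Sum.inr (σ.toMap.eMap e) :=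
  (σ.toMap.hs e).symm

/-- Maps of input trees preserve the colors of the sources of the leaves. -/
theorem leafColor (σ : CMap (inTree Γ a) (inTree Γ' b)) (e : inEdge Γ a) :
    Γ'.col.vMap (Γ'.gr.s (σ.toMap.eMap e).1) = Γ.col.vMap (Γ.gr.s e.1) := by
  have h := σ.hv (Sum.inr e)
  rw [CMap.vMap_inr] at h
  exact h

/-- An isomorphism of input trees maps the root to the root. -/
theorem rootFixed (σ : CMap (inTree Γ a) (inTree Γ' b)) (hσ : σ.IsIso) :
    σ.toMap.vMap (Sum.inl ()) = Sum.inl () := by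
  rcases h : σ.toMap.vMap (Sum.inl ()) with u | e'
  · cases u; rfl
  · obtain ⟨e, rfl⟩ := hσ.2.2 e'
    have ht : (Sum.inl () : Unit ⊕ inEdge Γ' b) = σ.toMap.vMap (Sum.inl ()) := σ.toMap.ht e
    rw [h] at ht
    exact absurd ht (by simp)

/-- An isomorphism of input trees preserves the color of the root. -/
theorem rootColor (σ : CMap (inTree Γ a) (inTree Γ' b)) (hσ : σ.IsIso) :
    Γ'.col.vMap b = Γ.col.vMap a := by
  have h := σ.hv (Sum.inl ())
  rw [rootFixed σ hσ] at h
  exact h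

end TreeLemmas

/-! ### Phase spaces and linear control systems (the `FinVect` case) -/

set_option linter.unusedSectionVars false

variable (P : C.V → Type)
variable [∀ c, AddCommGroup (P c)] [∀ c, Module ℝ (P c)]
  [∀ c, Module.Finite ℝ (P c)]

/-- Transport along an equality of colors. -/
def pcast {c c' : C.V} (h : c = c') : P c ≃ₗ[ℝ] P c' := by
  subst h; exact LinearEquiv.refl ℝ (P c)

/-- The linear map `ℙ f : ℙ X → ℙ Y` induced by a map `f : Y → X` of sets over the
set of colors. -/
def phasePull {X Y : Type} (α : X → C.V) (β : Y → C.V) (f : Y → X)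
    (hc : ∀ y, α (f y) = β y) :
    (∀ x, P (α x)) →ₗ[ℝ] (∀ y, P (β y)) where
  toFun v y := pcast P (hc y) (v (f y))
  map_add' u v := by funext y; simp
  map_smul' r v := by funext y; simp

/-- The phase space `ℙ(lv I(a))` of the leaves of the input tree of `a`. -/
abbrev LeafSpace (Γ : CGraph C) (a : Γ.gr.V) : Type :=
  ∀ e : inEdge Γ a, P (Γ.col.vMap (Γ.gr.s e.1))

/-- The space `Ctrl_FV(I(a))` of linear control systems associated to the input tree
of a node `a`: all linear maps from the phase space of the leaves to the phase space
of the root. -/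
abbrev CtrlFV (Γ : CGraph C) (a : Γ.gr.V) : Type :=
  LeafSpace P Γ a →ₗ[ℝ] P (Γ.col.vMap a)

/-- The map `ℙ(σ|_{lv}) : ℙ(lv I(b)) → ℙ(lv I(a))` induced by a map of input trees
`σ : I(a) → I(b)`. -/
def leafPull {Γ Γ' : CGraph C} {a : Γ.gr.V} {b : Γ'.gr.V}
    (σ : CMap (inTree Γ a) (inTree Γ' b)) :
    LeafSpace P Γ' b →ₗ[ℝ] LeafSpace P Γ a :=
  phasePull P (fun e' : inEdge Γ' b => Γ'.col.vMap (Γ'.gr.s e'.1))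
    (fun e : inEdge Γ a => Γ.col.vMap (Γ.gr.s e.1)) σ.toMap.eMap (leafColor σ)

/-- The action `Ctrl_FV(σ) X = X ∘ ℙ(σ|_{lv})` of an isomorphism of input trees on
linear control systems. -/
def ctrlMapFV {Γ Γ' : CGraph C} {a : Γ.gr.V} {b : Γ'.gr.V}
    (σ : CMap (inTree Γ a) (inTree Γ' b)) (hσ : σ.IsIso) :
    CtrlFV P Γ a →ₗ[ℝ] CtrlFV P Γ' b where
  toFun X := ((pcast P (rootColor σ hσ).symm).toLinearMap.comp X).comp (leafPull P σ)
  map_add' X Y := by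
    simp only [LinearMap.comp_add, LinearMap.add_comp]
  map_smul' r X := by
    simp only [LinearMap.comp_smul, LinearMap.smul_comp, RingHom.id_apply]

/-- The space of virtual groupoid-invariant linear vector fields on a finite graph
over `C`. -/
def VSpaceFV (Γ : CGraph C) : Submodule ℝ (∀ a : Γ.gr.V, CtrlFV P Γ a) where
  carrier := {X | ∀ (a b : Γ.gr.V) (σ : CMap (inTree Γ a) (inTree Γ b)) (hσ : σ.IsIso),
    ctrlMapFV P σ hσ (X a) = X b}
  add_mem' := fun hX hY a b σ hσ => by
    simp only [Set.mem_setOf_eq] at *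
    simp only [Pi.add_apply, map_add]
    rw [hX a b σ hσ, hY a b σ hσ]
  zero_mem' := fun a b σ hσ => by simp
  smul_mem' := fun r X hX a b σ hσ => by
    simp only [Set.mem_setOf_eq] at *
    simp only [Pi.smul_apply, map_smul]
    rw [hX a b σ hσ]

/-- The canonical projection `ϖ_a : 𝕍_FV(Γ) → Ctrl_FV(I(a))`. -/
def VprojFV (Γ : CGraph C) (a : Γ.gr.V) :
    ↥(VSpaceFV P Γ) →ₗ[ℝ] CtrlFV P Γ a :=
  (LinearMap.proj a).comp (VSpaceFV P Γ).subtype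

/-- The total phase space `ℙ Γ₀` of a graph over `C`. -/
abbrev TotalPhase (Γ : CGraph C) : Type := ∀ a : Γ.gr.V, P (Γ.col.vMap a)

/-- The map `ℙ(ξ|_{lv I(a)}) : ℙ Γ₀ → ℙ lv I(a)` induced by the canonical map
`ξ : I(a) → Γ`. -/
def leafRestrict (Γ : CGraph C) (a : Γ.gr.V) :
    TotalPhase P Γ →ₗ[ℝ] LeafSpace P Γ a :=
  phasePull P Γ.col.vMap (fun e : inEdge Γ a => Γ.col.vMap (Γ.gr.s e.1))
    (fun e : inEdge Γ a => Γ.gr.s e.1) (fun _ => rfl)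

/-- The map `ℙ φ : ℙ Γ'₀ → ℙ Γ₀` on total phase spaces induced by a map
`φ : Γ → Γ'` of graphs over `C`. -/
def totalPull {Γ Γ' : CGraph C} (φ : CMap Γ Γ') :
    TotalPhase P Γ' →ₗ[ℝ] TotalPhase P Γ :=
  phasePull P Γ'.col.vMap Γ.col.vMap φ.toMap.vMap φ.hv

/-- The map `S_Γ` sending a virtual groupoid-invariant linear vector field to an
actual linear vector field on `ℙ Γ₀`; its component at `a` is
`ϖ_a(v) ∘ ℙ(ξ|_{lv I(a)})`. -/
def SMapFV (Γ : CGraph C) :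
    ↥(VSpaceFV P Γ) →ₗ[ℝ] (TotalPhase P Γ →ₗ[ℝ] TotalPhase P Γ) where
  toFun v := LinearMap.pi (fun a => (v.1 a).comp (leafRestrict P Γ a))
  map_add' u v := by
    apply LinearMap.ext
    intro x
    funext a
    simp [LinearMap.pi_apply]
  map_smul' r v := by
    apply LinearMap.ext
    intro x
    funext a
    simp [LinearMap.pi_apply]

/-! ### Identity and composition of étale maps -/

theorem sumElim_bij {A B : Type} {g : A → B} (hg : Function.Bijective g) :
    Function.Bijective
      (Sum.elim (fun _ : Unit => (Sum.inl () : Unit ⊕ B)) (fun a => Sum.inr (g a))) := by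
  constructor
  · intro x y hxy
    cases x with
    | inl u =>
      cases y with
      | inl u' => cases u; cases u'; rfl
      | inr a => exact absurd hxy (by simp)
    | inr a =>
      cases y with
      | inl u => exact absurd hxy (by simp)
      | inr a' =>
        simp only [Sum.elim_inr, Sum.inr.injEq] at hxy
        exact congrArg Sum.inr (hg.1 hxy)
  · intro y
    cases y with
    | inl u => exact ⟨Sum.inl (), by cases u; rfl⟩
    | inr b =>
      obtain ⟨a, rfl⟩ := hg.2 b
      exact ⟨Sum.inr a, rfl⟩

theorem isEtale_id (Γ : CGraph C) : IsEtale (CMap.id Γ) := fun a => by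
  have he : Function.Bijective (liftEdge (CMap.id Γ) a) := by
    have h : liftEdge (CMap.id Γ) a = fun e => e := funext fun e => Subtype.ext rfl
    rw [h]
    exact Function.bijective_id
  exact ⟨sumElim_bij he, he⟩

theorem isEtale_comp {Γ₁ Γ₂ Γ₃ : CGraph C} {g : CMap Γ₂ Γ₃} {f : CMap Γ₁ Γ₂}
    (hg : IsEtale g) (hf : IsEtale f) : IsEtale (g.comp f) := fun a => by
  have he : Function.Bijective (liftEdge (g.comp f) a) := by
    have h : liftEdge (g.comp f) a =
        fun e => liftEdge g (f.toMap.vMap a) (liftEdge f a e) :=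
      funext fun e => Subtype.ext rfl
    rw [h]
    exact Function.Bijective.comp (hg (f.toMap.vMap a)).2 (hf a).2
  exact ⟨sumElim_bij he, he⟩

/-! Each `φ_a` is an isomorphism of input trees and `Ctrl_FV` is functorial on such
isomorphisms, so `Ctrl_FV(φ_a)` is invertible and the defining equation forces
`ϖ_a(𝕍(φ) w) = Ctrl_FV(φ_a)⁻¹ (ϖ_{φ(a)} w)`. This family is again groupoid-invariant, because
for `σ : I(a) → I(b)` the field `w` is invariant under `φ_b ∘ σ ∘ φ_a⁻¹`. Functoriality then
follows from uniqueness, since `(ψ ∘ φ)_a = ψ_{φ(a)} ∘ φ_a` and every `w` is invariant under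
`id_a ∈ G(Γ)`. -/

theorem pcast_pcast {c₁ c₂ c₃ : C.V} (h : c₁ = c₂) (h' : c₂ = c₃) (x : P c₁) :
    pcast P h' (pcast P h x) = pcast P (h.trans h') x := by
  subst h h'
  rfl

section InTree

variable {Γ Γ' : CGraph C} {a : Γ.gr.V} {b : Γ'.gr.V}

theorem inTree_hom_ext {σ τ : CMap (inTree Γ a) (inTree Γ' b)}
    (hroot : σ.toMap.vMap (Sum.inl ()) = τ.toMap.vMap (Sum.inl ()))
    (he : σ.toMap.eMap = τ.toMap.eMap) : σ = τ := by
  refine CMap.ext (GraphMap.ext (funext fun v => ?_) he)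
  rcases v with ⟨⟩ | e
  · exact hroot
  · rw [CMap.vMap_inr, CMap.vMap_inr, he]

noncomputable def edgeEquiv (σ : CMap (inTree Γ a) (inTree Γ' b)) (hσ : σ.IsIso) :
    inEdge Γ a ≃ inEdge Γ' b :=
  Equiv.ofBijective _ hσ.2

noncomputable def invCMap (σ : CMap (inTree Γ a) (inTree Γ' b)) (hσ : σ.IsIso) :
    CMap (inTree Γ' b) (inTree Γ a) where
  toMap :=
    { vMap := Sum.elim (fun _ => Sum.inl ()) (fun e => Sum.inr ((edgeEquiv σ hσ).symm e))
      eMap := (edgeEquiv σ hσ).symm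
      hs := fun _ => rfl
      ht := fun _ => rfl }
  hv v := by
    rcases v with ⟨⟩ | e
    · exact (rootColor σ hσ).symm
    · have h := leafColor σ ((edgeEquiv σ hσ).symm e)
      rw [show σ.toMap.eMap _ = e from (edgeEquiv σ hσ).apply_symm_apply e] at h
      exact h.symm
  he e := by
    have h := σ.he ((edgeEquiv σ hσ).symm e)
    rw [show σ.toMap.eMap _ = e from (edgeEquiv σ hσ).apply_symm_apply e] at h
    exact h.symm

theorem invCMap_isIso (σ : CMap (inTree Γ a) (inTree Γ' b)) (hσ : σ.IsIso) :
    (invCMap σ hσ).IsIso :=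
  ⟨sumElim_bij (edgeEquiv σ hσ).symm.bijective, (edgeEquiv σ hσ).symm.bijective⟩

theorem comp_invCMap (σ : CMap (inTree Γ a) (inTree Γ' b)) (hσ : σ.IsIso) :
    σ.comp (invCMap σ hσ) = CMap.id (inTree Γ' b) :=
  inTree_hom_ext (rootFixed σ hσ) (funext (edgeEquiv σ hσ).apply_symm_apply)

theorem invCMap_comp (σ : CMap (inTree Γ a) (inTree Γ' b)) (hσ : σ.IsIso) :
    (invCMap σ hσ).comp σ = CMap.id (inTree Γ a) :=
  inTree_hom_ext (congrArg (invCMap σ hσ).toMap.vMap (rootFixed σ hσ))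
    (funext (edgeEquiv σ hσ).symm_apply_apply)

theorem inMap_comp {Γ₁ Γ₂ Γ₃ : CGraph C} (φ : CMap Γ₁ Γ₂) (ψ : CMap Γ₂ Γ₃) (a : Γ₁.gr.V) :
    inMap (ψ.comp φ) a = (inMap ψ (φ.toMap.vMap a)).comp (inMap φ a) :=
  inTree_hom_ext rfl rfl

end InTree

section CtrlFunctor

variable {Γ₁ Γ₂ Γ₃ : CGraph C} {a : Γ₁.gr.V} {b : Γ₂.gr.V} {c : Γ₃.gr.V}

theorem leafPull_comp (σ : CMap (inTree Γ₁ a) (inTree Γ₂ b))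
    (τ : CMap (inTree Γ₂ b) (inTree Γ₃ c)) :
    leafPull P (τ.comp σ) = (leafPull P σ).comp (leafPull P τ) := by
  ext v e
  exact (pcast_pcast P _ _ _).symm

theorem ctrlMapFV_of_eq_comp {ρ : CMap (inTree Γ₁ a) (inTree Γ₃ c)}
    {σ : CMap (inTree Γ₁ a) (inTree Γ₂ b)} {τ : CMap (inTree Γ₂ b) (inTree Γ₃ c)}
    (h : ρ = τ.comp σ) (hρ : ρ.IsIso) (hσ : σ.IsIso) (hτ : τ.IsIso) (X : CtrlFV P Γ₁ a) :
    ctrlMapFV P ρ hρ X = ctrlMapFV P τ hτ (ctrlMapFV P σ hσ X) := by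
  subst h
  ext v
  show pcast P _ (X (leafPull P (τ.comp σ) v)) =
    pcast P _ (pcast P _ (X (leafPull P σ (leafPull P τ v))))
  rw [leafPull_comp, pcast_pcast]
  rfl

theorem ctrlMapFV_of_eq_id {ρ : CMap (inTree Γ₁ a) (inTree Γ₁ a)}
    (h : ρ = CMap.id (inTree Γ₁ a)) (hρ : ρ.IsIso) (X : CtrlFV P Γ₁ a) :
    ctrlMapFV P ρ hρ X = X := by
  subst h
  rfl

noncomputable def ctrlEquivFV (σ : CMap (inTree Γ₁ a) (inTree Γ₂ b)) (hσ : σ.IsIso) :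
    CtrlFV P Γ₁ a ≃ₗ[ℝ] CtrlFV P Γ₂ b where
  __ := ctrlMapFV P σ hσ
  invFun := ctrlMapFV P (invCMap σ hσ) (invCMap_isIso σ hσ)
  left_inv X := (ctrlMapFV_of_eq_comp P (invCMap_comp σ hσ).symm _ _ _ X).symm.trans
    (ctrlMapFV_of_eq_id P rfl (CMap.isIso_id _) X)
  right_inv X := (ctrlMapFV_of_eq_comp P (comp_invCMap σ hσ).symm _ _ _ X).symm.trans
    (ctrlMapFV_of_eq_id P rfl (CMap.isIso_id _) X)

theorem ctrlEquivFV_apply (σ : CMap (inTree Γ₁ a) (inTree Γ₂ b)) (hσ : σ.IsIso)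
    (X : CtrlFV P Γ₁ a) : ctrlEquivFV P σ hσ X = ctrlMapFV P σ hσ X := rfl

end CtrlFunctor

section Pullback

variable {Γ Γ' : CGraph C}

theorem ctrlEquivFV_symm_mem_VSpaceFV (φ : CMap Γ Γ') (hφ : IsEtale φ) (w : ↥(VSpaceFV P Γ')) :
    (fun a => (ctrlEquivFV P (inMap φ a) (hφ a)).symm (w.1 (φ.toMap.vMap a))) ∈ VSpaceFV P Γ := by
  intro a b σ hσ
  set φa := inMap φ a
  set φb := inMap φ b
  rw [LinearEquiv.eq_symm_apply, ctrlEquivFV_apply]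
  calc ctrlMapFV P φb (hφ b) (ctrlMapFV P σ hσ ((ctrlEquivFV P φa (hφ a)).symm _))
      = ctrlMapFV P (φb.comp σ) ((hφ b).comp hσ)
          (ctrlMapFV P (invCMap φa (hφ a)) (invCMap_isIso _ _) (w.1 (φ.toMap.vMap a))) :=
        (ctrlMapFV_of_eq_comp P rfl _ _ _ _).symm
    _ = ctrlMapFV P ((φb.comp σ).comp (invCMap φa (hφ a)))
          (((hφ b).comp hσ).comp (invCMap_isIso _ _)) (w.1 (φ.toMap.vMap a)) :=
        (ctrlMapFV_of_eq_comp P rfl _ _ _ _).symm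
    _ = w.1 (φ.toMap.vMap b) := w.2 _ _ _ _

/-- The linear map `𝕍_FV(φ) : 𝕍_FV(Γ') → 𝕍_FV(Γ)` of an étale map `φ`. -/
noncomputable def VpullFV (φ : CMap Γ Γ') (hφ : IsEtale φ) :
    ↥(VSpaceFV P Γ') →ₗ[ℝ] ↥(VSpaceFV P Γ) :=
  LinearMap.codRestrict (VSpaceFV P Γ)
    (LinearMap.pi fun a =>
      (ctrlEquivFV P (inMap φ a) (hφ a)).symm.toLinearMap ∘ₗ VprojFV P Γ' (φ.toMap.vMap a))
    (ctrlEquivFV_symm_mem_VSpaceFV P φ hφ)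

theorem VpullFV_spec (φ : CMap Γ Γ') (hφ : IsEtale φ) (a : Γ.gr.V) (w : ↥(VSpaceFV P Γ')) :
    ctrlMapFV P (inMap φ a) (hφ a) (VprojFV P Γ a (VpullFV P φ hφ w)) =
      VprojFV P Γ' (φ.toMap.vMap a) w :=
  (ctrlEquivFV P (inMap φ a) (hφ a)).apply_symm_apply _

theorem VpullFV_unique (φ : CMap Γ Γ') (hφ : IsEtale φ)
    (L : ↥(VSpaceFV P Γ') →ₗ[ℝ] ↥(VSpaceFV P Γ))
    (hL : ∀ (a : Γ.gr.V) (w : ↥(VSpaceFV P Γ')),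
      ctrlMapFV P (inMap φ a) (hφ a) (VprojFV P Γ a (L w)) = VprojFV P Γ' (φ.toMap.vMap a) w) :
    L = VpullFV P φ hφ :=
  LinearMap.ext fun w => Subtype.ext <| funext fun a =>
    (ctrlEquivFV P (inMap φ a) (hφ a)).injective ((hL a w).trans (VpullFV_spec P φ hφ a w).symm)

theorem VpullFV_id (Γ : CGraph C) : VpullFV P (CMap.id Γ) (isEtale_id Γ) = LinearMap.id :=
  (VpullFV_unique P _ _ LinearMap.id fun a w => w.2 a a _ _).symm

theorem VpullFV_comp {Γ₁ Γ₂ Γ₃ : CGraph C} (φ : CMap Γ₁ Γ₂) (ψ : CMap Γ₂ Γ₃)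
    (hφ : IsEtale φ) (hψ : IsEtale ψ) :
    VpullFV P (ψ.comp φ) (isEtale_comp hψ hφ) = VpullFV P φ hφ ∘ₗ VpullFV P ψ hψ := by
  refine (VpullFV_unique P _ _ _ fun a w => ?_).symm
  refine (ctrlMapFV_of_eq_comp (c := ψ.toMap.vMap (φ.toMap.vMap a)) P (inMap_comp φ ψ a) _ (hφ a)
    (hψ _) _).trans ?_
  rw [LinearMap.comp_apply, VpullFV_spec]
  exact VpullFV_spec P ψ hψ _ w

end Pullback

/-- **Statement 6.** For every étale map `φ : Γ → Γ'` of finite graphs over `C` there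
is a unique linear map `𝕍_FV(φ) : 𝕍_FV(Γ') → 𝕍_FV(Γ)` satisfying
`Ctrl_FV(φ_a)(ϖ_a(𝕍_FV(φ) w)) = ϖ_{φ(a)}(w)` (i.e.
`ϖ_a ∘ 𝕍_FV(φ) = Ctrl_FV(φ_a)⁻¹ ∘ ϖ_{φ(a)}`) for every node `a` of `Γ`, and this
assignment is a contravariant functor: it sends identities to identities and
compositions to reversed compositions. -/
theorem VFV_extends_to_contravariant_functor {C : DGraph} (P : C.V → Type)
    [∀ c, AddCommGroup (P c)] [∀ c, Module ℝ (P c)] [∀ c, Module.Finite ℝ (P c)] :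
    ∃ V : ∀ (Γ Γ' : CGraph C) [Fintype Γ.gr.E] [Fintype Γ'.gr.E]
        (φ : CMap Γ Γ'), IsEtale φ → (↥(VSpaceFV P Γ') →ₗ[ℝ] ↥(VSpaceFV P Γ)),
      (∀ (Γ Γ' : CGraph C) [Fintype Γ.gr.E] [Fintype Γ'.gr.E]
          (φ : CMap Γ Γ') (hφ : IsEtale φ),
        (∀ (a : Γ.gr.V) (w : ↥(VSpaceFV P Γ')),
          ctrlMapFV P (inMap φ a) (hφ a) (VprojFV P Γ a (V Γ Γ' φ hφ w)) =
            VprojFV P Γ' (φ.toMap.vMap a) w) ∧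
        (∀ L : ↥(VSpaceFV P Γ') →ₗ[ℝ] ↥(VSpaceFV P Γ),
          (∀ (a : Γ.gr.V) (w : ↥(VSpaceFV P Γ')),
            ctrlMapFV P (inMap φ a) (hφ a) (VprojFV P Γ a (L w)) =
              VprojFV P Γ' (φ.toMap.vMap a) w) → L = V Γ Γ' φ hφ)) ∧
      (∀ (Γ : CGraph C) [Fintype Γ.gr.E],
        V Γ Γ (CMap.id Γ) (isEtale_id Γ) = LinearMap.id) ∧
      (∀ (Γ₁ Γ₂ Γ₃ : CGraph C) [Fintype Γ₁.gr.E] [Fintype Γ₂.gr.E] [Fintype Γ₃.gr.E]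
          (φ : CMap Γ₁ Γ₂) (ψ : CMap Γ₂ Γ₃) (hφ : IsEtale φ) (hψ : IsEtale ψ),
        V Γ₁ Γ₃ (ψ.comp φ) (isEtale_comp hψ hφ) =
          (V Γ₁ Γ₂ φ hφ).comp (V Γ₂ Γ₃ ψ hψ)) := by
  exact ⟨fun Γ Γ' _ _ φ hφ => VpullFV P φ hφ,
    fun Γ Γ' _ _ φ hφ => ⟨VpullFV_spec P φ hφ, VpullFV_unique P φ hφ⟩,
    fun Γ _ => VpullFV_id P Γ,
    fun _ _ _ _ _ _ φ ψ hφ hψ => VpullFV_comp P φ ψ hφ hψ⟩
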